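/- arXiv:math/0501331 — 4 statements merged into one kernel-verified Lean document; each statement's English description precedes it below -/
import Mathlib

section
/- Let Φ be an automorphism of a category C of universal algebras containing a free monogenic algebra A₀ with free generator x₀. If Φ(A₀) is isomorphic to A₀, then for every free algebra F in C, Φ(F) is isomorphic to F. -/
open CategoryTheory

/-- `F` is a free object over `X` via `ι` with respect to the forgetful functor `U`. -/
def IsFreeOver {C : Type*} [Category C] (U : C ⥤ Type*) (F : C) (X : Type*)
    (ι : X → U.obj F) : Prop :=
  ∀ (A : C) (f : X → U.obj A), ∃! h : F ⟶ A, ∀ x, U.map h (ι x) = f x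

/-- Two free objects over the same `X` are isomorphic. -/
theorem frees_iso {C : Type*} [Category C] (U : C ⥤ Type*) {F F' : C} {X : Type*}
    {ι : X → U.obj F} {ι' : X → U.obj F'}
    (h : IsFreeOver U F X ι) (h' : IsFreeOver U F' X ι') : Nonempty (F ≅ F') := by
  obtain ⟨u, hu, -⟩ := h F' ι'
  obtain ⟨v, hv, -⟩ := h' F ι
  refine ⟨⟨u, v, ?_, ?_⟩⟩
  · obtain ⟨w, -, hw⟩ := h F ι
    have e1 := hw (u ≫ v) (by intro x; simp [FunctorToTypes.map_comp_apply, hu, hv])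
    have e2 := hw (𝟙 F) (by intro x; simp)
    rw [e1, e2]
  · obtain ⟨w, -, hw⟩ := h' F' ι'
    have e1 := hw (v ≫ u) (by intro x; simp [FunctorToTypes.map_comp_apply, hu, hv])
    have e2 := hw (𝟙 F') (by intro x; simp)
    rw [e1, e2]

/-- Freeness transports along a self-equivalence admitting a natural bijection on underlying
sets. -/
theorem free_transport {C : Type*} [Category C] (U : C ⥤ Type*) (E : C ≌ C)
    (T : ∀ B : C, U.obj B ≃ U.obj (E.functor.obj B))
    (hT : ∀ {B B' : C} (h : B ⟶ B') (b : U.obj B),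
      T B' (U.map h b) = U.map (E.functor.map h) (T B b))
    (F : C) (X : Type*) (ι : X → U.obj F) (hF : IsFreeOver U F X ι) :
    IsFreeOver U (E.functor.obj F) X (fun x => T F (ι x)) := by
  intro A f
  obtain ⟨g, hg, hg'⟩ := hF (E.inverse.obj A)
    (fun x => (T _).symm (U.map (E.counitIso.inv.app A) (f x)))
  refine ⟨E.functor.map g ≫ E.counitIso.hom.app A, ?_, ?_⟩
  · intro x
    have h1 : U.map (E.functor.map g) (T F (ι x))
        = T _ (U.map g (ι x)) := (hT g (ι x)).symm
    rw [FunctorToTypes.map_comp_apply, h1, hg x, Equiv.apply_symm_apply,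
      ← FunctorToTypes.map_comp_apply, Iso.inv_hom_id_app, FunctorToTypes.map_id_apply]
  · intro h' hh'
    set FF := E.fullyFaithfulFunctor
    set g' : F ⟶ E.inverse.obj A := FF.preimage (h' ≫ E.counitIso.inv.app A) with hg'def
    have hmap : E.functor.map g' = h' ≫ E.counitIso.inv.app A := FF.map_preimage _
    have hgι : ∀ x, U.map g' (ι x)
        = (T _).symm (U.map (E.counitIso.inv.app A) (f x)) := by
      intro x
      apply (T _).injective
      rw [hT g' (ι x), hmap, Equiv.apply_symm_apply, FunctorToTypes.map_comp_apply, hh' x]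
    have : g' = g := hg' g' hgι
    calc h' = E.functor.map g' ≫ E.counitIso.hom.app A := by
              rw [hmap, Category.assoc, Iso.inv_hom_id_app]; simp
      _ = E.functor.map g ≫ E.counitIso.hom.app A := by rw [this]

/-- If an automorphism `Φ` of a category of universal algebras (with forgetful functor `U`)
containing a free monogenic algebra `A₀` on `x₀` takes `A₀` to an isomorphic object, then it
takes every free algebra `F` to an isomorphic one. -/
theorem stmt0 {C : Type*} [Category C] (U : C ⥤ Type*) (A₀ : C) (x₀ : U.obj A₀)
    (hfree : IsFreeOver U A₀ PUnit fun _ => x₀)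
    (Φ Ψ : C ⥤ C) (h1 : Φ ⋙ Ψ = 𝟭 C) (h2 : Ψ ⋙ Φ = 𝟭 C)
    (hA₀ : Nonempty (Φ.obj A₀ ≅ A₀)) :
    ∀ (F : C) (X : Type*) (ι : X → U.obj F), IsFreeOver U F X ι →
      Nonempty (Φ.obj F ≅ F) := by
  obtain ⟨e⟩ := hA₀
  intro F X ι hF
  let E : C ≌ C := CategoryTheory.Equivalence.mk Φ Ψ (eqToIso h1.symm) (eqToIso h2)
  have hΦ : E.functor = Φ := rfl
  let FF : Φ.FullyFaithful := E.fullyFaithfulFunctor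
  -- the bijection between homs out of `A₀` and elements
  have θbij : ∀ B : C, Function.Bijective (fun β : A₀ ⟶ B => U.map β x₀) := by
    intro B
    constructor
    · intro β β' hββ'
      exact (hfree B fun _ => U.map β x₀).unique (fun _ => rfl) (fun _ => hββ'.symm)
    · intro b
      obtain ⟨β, hβ, -⟩ := hfree B fun _ => b
      exact ⟨β, hβ PUnit.unit⟩
  let θ : ∀ B : C, (A₀ ⟶ B) ≃ U.obj B := fun B => Equiv.ofBijective _ (θbij B)
  have θ_apply : ∀ (B : C) (β : A₀ ⟶ B), θ B β = U.map β x₀ := fun _ _ => rfl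
  let T : ∀ B : C, U.obj B ≃ U.obj (Φ.obj B) := fun B =>
    (θ B).symm.trans ((FF.homEquiv.trans (e.homCongr (Iso.refl _))).trans (θ (Φ.obj B)))
  have T_apply : ∀ (B : C) (b : U.obj B),
      T B b = U.map (e.inv ≫ Φ.map ((θ B).symm b) ≫ 𝟙 _) x₀ := fun _ _ => rfl
  have θsymm_comp : ∀ {B B' : C} (h : B ⟶ B') (b : U.obj B),
      (θ B').symm (U.map h b) = (θ B).symm b ≫ h := by
    intro B B' h b
    apply (θ B').injective
    rw [Equiv.apply_symm_apply, θ_apply, U.map_comp, types_comp_apply]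
    exact congrArg (U.map h) ((θ B).apply_symm_apply b).symm
  have hT : ∀ {B B' : C} (h : B ⟶ B') (b : U.obj B),
      T B' (U.map h b) = U.map (Φ.map h) (T B b) := by
    intro B B' h b
    rw [T_apply, T_apply, θsymm_comp h b]
    simp [FunctorToTypes.map_comp_apply]
  have hfreeΦF : IsFreeOver U (Φ.obj F) X (fun x => T F (ι x)) :=
    free_transport U E T (fun h b => hT h b) F X ι hF
  exact frees_iso U hfreeΦF hF
end

section
/- If w is a word in x, y such that the substitution of w defines an associative binary operation on every semigroup agreeing with a derived binary operation induced by a bijection fixing x and y in the free semigroup on {x, y}, then w = xy or w = yx. -/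
open FreeSemigroup

private lemma length_pos' (u : FreeSemigroup (Fin 2)) : 1 ≤ u.length := by
  simp [FreeSemigroup.length]

private lemma length_lift_ge (f : Fin 2 → FreeSemigroup (Fin 2)) (u : FreeSemigroup (Fin 2)) :
    u.length ≤ (FreeSemigroup.lift f u).length := by
  induction u using FreeSemigroup.recOnMul with
  | ih1 i => simpa using length_pos' (f i)
  | ih2 a b ha hb =>
      rw [map_mul, FreeSemigroup.length_mul, FreeSemigroup.length_mul]
      omega

private lemma eq_of_length_one (u : FreeSemigroup (Fin 2)) (h : u.length = 1) :
    ∃ i, u = FreeSemigroup.of i := by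
  obtain ⟨hd, tl⟩ := u
  simp [FreeSemigroup.length] at h
  exact ⟨hd, by simp [FreeSemigroup.of, h]⟩

private lemma eq_of_length_two (u : FreeSemigroup (Fin 2)) (h : u.length = 2) :
    ∃ i j, u = FreeSemigroup.of i * FreeSemigroup.of j := by
  obtain ⟨hd, tl⟩ := u
  simp [FreeSemigroup.length] at h
  match tl, h with
  | [j], _ => exact ⟨hd, j, rfl⟩

/-- If a word `w` in the free semigroup on two generators `x, y` defines (by substitution) a
derived binary operation `∙` which is associative, and for which there is a bijection `s` of the
free semigroup on `{x, y}` fixing the generators and carrying the original multiplication to `∙`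
(so that the free semigroup with operation `∙` is again free on `x, y`), then `w = xy` or
`w = yx`, i.e. the derived operation is the original multiplication or its opposite. -/
theorem stmt2 (w : FreeSemigroup (Fin 2))
    (op : FreeSemigroup (Fin 2) → FreeSemigroup (Fin 2) → FreeSemigroup (Fin 2))
    (hop : ∀ a b, op a b = FreeSemigroup.lift (fun i => if i = 0 then a else b) w)
    (hassoc : ∀ a b c, op (op a b) c = op a (op b c))
    (hfree : ∃ s : FreeSemigroup (Fin 2) ≃ FreeSemigroup (Fin 2),
      s (FreeSemigroup.of 0) = FreeSemigroup.of 0 ∧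
      s (FreeSemigroup.of 1) = FreeSemigroup.of 1 ∧
      ∀ a b, s (a * b) = op (s a) (s b)) :
    (∀ a b, op a b = a * b) ∨ (∀ a b, op a b = b * a) := by
  obtain ⟨s, hs0, hs1, hsm⟩ := hfree
  -- lower bound on lengths of values of `op`
  have hle : ∀ a b, w.length ≤ (op a b).length := fun a b => by
    rw [hop]; exact length_lift_ge _ w
  rcases Nat.lt_or_ge w.length 2 with h2 | h2
  · -- length 1 : injectivity fails
    exfalso
    have h1 : w.length = 1 := by have := length_pos' w; omega
    obtain ⟨i, rfl⟩ := eq_of_length_one w h1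
    fin_cases i
    · -- op a b = a
      have hx : s (FreeSemigroup.of 0 * FreeSemigroup.of 0) = s (FreeSemigroup.of 0) := by
        rw [hsm, hs0, hop]; simp
      have := s.injective hx
      have := congrArg FreeSemigroup.length this
      simp [FreeSemigroup.length_mul] at this
    · -- op a b = b
      have hx : s (FreeSemigroup.of 1 * FreeSemigroup.of 1) = s (FreeSemigroup.of 1) := by
        rw [hsm, hs1, hop]; simp
      have := s.injective hx
      have := congrArg FreeSemigroup.length this
      simp [FreeSemigroup.length_mul] at this
  rcases Nat.lt_or_ge w.length 3 with h3 | h3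
  · -- length 2
    have h2' : w.length = 2 := by omega
    obtain ⟨i, j, rfl⟩ := eq_of_length_two w h2'
    have hopw : ∀ a b, op a b =
        (if i = 0 then a else b) * (if j = 0 then a else b) := fun a b => by
      rw [hop, map_mul]; simp
    fin_cases i <;> fin_cases j
    · -- w = xx : injectivity fails
      exfalso
      have hx : s (FreeSemigroup.of 0 * FreeSemigroup.of 1)
          = s (FreeSemigroup.of 0 * FreeSemigroup.of 0) := by
        rw [hsm, hsm, hs0, hs1, hopw, hopw]; simp
      have := s.injective hx
      exact absurd this (by decide)
    · left; intro a b; rw [hopw]; simp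
    · right; intro a b; rw [hopw]; simp
    · -- w = yy : injectivity fails
      exfalso
      have hx : s (FreeSemigroup.of 0 * FreeSemigroup.of 1)
          = s (FreeSemigroup.of 1 * FreeSemigroup.of 1) := by
        rw [hsm, hsm, hs0, hs1, hopw, hopw]; simp
      have := s.injective hx
      exact absurd this (by decide)
  · -- length ≥ 3 : surjectivity fails, xy not in range
    exfalso
    have key : ∀ u, (s u).length ≠ 2 := by
      intro u
      induction u using FreeSemigroup.recOnMul with
      | ih1 i =>
          have hi : i = 0 ∨ i = 1 := by omega
          rcases hi with rfl | rfl <;>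
            simp [hs0, hs1, FreeSemigroup.length]
      | ih2 a b _ _ =>
          rw [hsm]
          have := hle (s (FreeSemigroup.of a)) (s b)
          omega
    obtain ⟨u, hu⟩ := s.surjective (FreeSemigroup.of 0 * FreeSemigroup.of 1)
    exact key u (by rw [hu]; simp [FreeSemigroup.length_mul, FreeSemigroup.length,
      FreeSemigroup.of])
end

section
/- With the notation of the endomorphism monoid End₁ of the regular representation (W₁ = RF₁, F₁) of the infinite cyclic group F₁ = ⟨x⟩: the set T_e of all endomorphisms ν_{(w,e)} (w ∈ W₁) is a prime ideal of the monoid End₁, and every prime ideal of End₁ different from T_e contains T_e or contains T_0 = {ν_{(0,g)} : g ∈ F₁}; moreover T_e is a minimal prime ideal. -/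
/-!
`T_e` and `T_0` are the kernels of the multiplicative maps `ν ↦ ν⁽²⁾ ∈ End(ℤ)` and
`ν ↦ ν⁽¹⁾ ∈ End_R(W₁)`; as `End(ℤ) ≅ ℤ` has no zero divisors, `T_e` is prime. Since
`T_0 · T_e = {ν_{(0,e)}}` lies in every ideal, a prime ideal missing some `t ∈ T_e` contains `T_0`.
For minimality, every `ν_{(w,e)}` factors as `ν_{(w,x)} ∘ ν_{(1,e)}` with `ν_{(w,x)} ∉ T_e`, so a
prime ideal inside `T_e` contains `ν_{(1,e)}` and therefore all of `T_e`.
-/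

open LaurentPolynomial

/-- An endomorphism of the regular representation `(W₁, F₁) = (RF₁, F₁)` of the infinite cyclic
group `F₁ = ⟨x⟩` over `R`: an `R`-linear endomorphism `f` of the group algebra
`RF₁ = R[T;T⁻¹]` together with an endomorphism `φ` of the (additively written) infinite cyclic
group `ℤ`, compatible with the action of the group by multiplication. -/
structure End1 (R : Type*) [CommRing R] where
  f : LaurentPolynomial R →ₗ[R] LaurentPolynomial R
  φ : ℤ →+ ℤ
  compat : ∀ (a : LaurentPolynomial R) (n : ℤ), f (a * T n) = f a * T (φ n)

variable {R : Type*} [CommRing R]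

/-- Composition of endomorphisms makes `End1 R` a monoid; `ν ∘ μ` has components
`ν.f ∘ μ.f` and `ν.φ ∘ μ.φ`. -/
noncomputable instance : Mul (End1 R) :=
  ⟨fun z u => ⟨z.f ∘ₗ u.f, z.φ.comp u.φ, fun a n => by
    simp [LinearMap.comp_apply, u.compat, z.compat]⟩⟩

/-- The identity endomorphism `ν_{(1,x)}`. -/
noncomputable instance : One (End1 R) :=
  ⟨⟨LinearMap.id, AddMonoidHom.id ℤ, fun a n => rfl⟩⟩


/-- An ideal of the monoid `End1 R`: a nonempty subset `I` with `M·I ⊆ I` and `I·M ⊆ I`. -/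
def IsMonoidIdeal (I : Set (End1 R)) : Prop :=
  I.Nonempty ∧ ∀ a ∈ I, ∀ m : End1 R, m * a ∈ I ∧ a * m ∈ I

/-- A prime ideal of the monoid `End1 R`. -/
def IsPrimeMonoidIdeal (I : Set (End1 R)) : Prop :=
  IsMonoidIdeal I ∧ ∀ a b : End1 R, a * b ∈ I → a ∈ I ∨ b ∈ I

theorem AddMonoidHom.eq_zero_or_eq_zero_of_comp_eq_zero {M : Type*} [AddCommGroup M]
    [Module.IsTorsionFree ℤ M] {f : ℤ →+ M} {g : ℤ →+ ℤ} (h : f.comp g = 0) : f = 0 ∨ g = 0 := by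
  have hg : g 1 • f 1 = 0 := by
    rw [← map_zsmul, smul_eq_mul, mul_one]
    exact DFunLike.congr_fun h 1
  rcases smul_eq_zero.mp hg with hg | hf
  · exact Or.inr (AddMonoidHom.ext_int hg)
  · exact Or.inl (AddMonoidHom.ext_int hf)

instance : NoZeroDivisors (AddMonoid.End ℤ) where
  eq_zero_or_eq_zero_of_mul_eq_zero := AddMonoidHom.eq_zero_or_eq_zero_of_comp_eq_zero

namespace LaurentPolynomial

theorem linearMap_ext {M : Type*} [AddCommMonoid M] [Module R M] {g h : R[T;T⁻¹] →ₗ[R] M}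
    (hT : ∀ n, g (T n) = h (T n)) : g = h := by
  refine LinearMap.ext fun p => ?_
  induction p using LaurentPolynomial.induction_on' with
  | add p q hp hq => rw [map_add, map_add, hp, hq]
  | C_mul_T n a => rw [← smul_eq_C_mul, map_smul, map_smul, hT]

/-- The augmentation `∑ aₙ Tⁿ ↦ ∑ aₙ`, with values in the constants. -/
noncomputable def augmentation : R[T;T⁻¹] →ₐ[R] R[T;T⁻¹] :=
  AddMonoidAlgebra.mapDomainAlgHom R R (0 : ℤ →+ ℤ)

@[simp]
theorem augmentation_T (n : ℤ) : augmentation (T n : R[T;T⁻¹]) = 1 :=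
  AddMonoidAlgebra.mapDomain_single

end LaurentPolynomial

namespace End1

@[ext]
theorem ext {a b : End1 R} (hf : a.f = b.f) (hφ : a.φ = b.φ) : a = b := by
  cases a; cases b; simp_all

@[simp] theorem mul_f (a b : End1 R) : (a * b).f = a.f ∘ₗ b.f := rfl
@[simp] theorem mul_φ (a b : End1 R) : (a * b).φ = a.φ.comp b.φ := rfl

noncomputable instance : Zero (End1 R) := ⟨⟨0, 0, by simp⟩⟩

@[simp] theorem zero_f : (0 : End1 R).f = 0 := rfl
@[simp] theorem zero_φ : (0 : End1 R).φ = 0 := rfl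

theorem zero_mul (a : End1 R) : 0 * a = 0 := by ext <;> simp

noncomputable def fHom : End1 R →ₙ* Module.End R R[T;T⁻¹] where
  toFun z := z.f
  map_mul' _ _ := rfl

noncomputable def φHom : End1 R →ₙ* AddMonoid.End ℤ where
  toFun z := z.φ
  map_mul' _ _ := rfl

/-- The endomorphism `ν_{(1,e)}`. -/
noncomputable def augmentation : End1 R :=
  ⟨LaurentPolynomial.augmentation.toLinearMap, 0, fun a n => by simp⟩

/-- The endomorphism `ν_{(w,x)}`. -/
noncomputable def mulLeft (w : R[T;T⁻¹]) : End1 R :=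
  ⟨LinearMap.mulLeft R w, AddMonoidHom.id ℤ, fun a n => (mul_assoc w a (T n)).symm⟩

theorem mulLeft_φ_ne_zero (w : R[T;T⁻¹]) : (mulLeft w).φ ≠ 0 :=
  fun h => one_ne_zero (DFunLike.congr_fun h 1)

theorem eq_mulLeft_mul_augmentation {z : End1 R} (hz : z.φ = 0) :
    z = mulLeft (z.f 1) * augmentation := by
  refine ext (LaurentPolynomial.linearMap_ext fun n => ?_) (by rw [hz]; rfl)
  have hTn : z.f (T n) = z.f 1 := by simpa [hz] using z.compat 1 n
  simp [hTn, mulLeft, augmentation]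

end End1

section Ideals

variable {M : Type*} [MulZeroClass M]

theorem isMonoidIdeal_setOf_map_eq_zero (c : End1 R →ₙ* M) (hc : c 0 = 0) :
    IsMonoidIdeal {z | c z = 0} :=
  ⟨⟨0, hc⟩, fun a (ha : c a = 0) m => ⟨by simp [ha], by simp [ha]⟩⟩

theorem isPrimeMonoidIdeal_setOf_map_eq_zero [NoZeroDivisors M] (c : End1 R →ₙ* M)
    (hc : c 0 = 0) : IsPrimeMonoidIdeal {z | c z = 0} :=
  ⟨isMonoidIdeal_setOf_map_eq_zero c hc, fun a b hab =>
    mul_eq_zero.mp ((map_mul c a b).symm.trans hab)⟩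

end Ideals

theorem IsMonoidIdeal.zero_mem {I : Set (End1 R)} (hI : IsMonoidIdeal I) : 0 ∈ I := by
  obtain ⟨a, ha⟩ := hI.1
  simpa only [End1.zero_mul] using (hI.2 a ha 0).1

namespace IsPrimeMonoidIdeal

variable {I : Set (End1 R)}

theorem setOf_φ_eq_zero_subset_or_setOf_f_eq_zero_subset (hI : IsPrimeMonoidIdeal I) :
    {z : End1 R | z.φ = 0} ⊆ I ∨ {z : End1 R | z.f = 0} ⊆ I := by
  refine or_iff_not_imp_left.mpr fun hTe z (hz : z.f = 0) => ?_
  obtain ⟨t, ht : t.φ = 0, htI⟩ := Set.not_subset.mp hTe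
  have hzt : z * t = 0 := End1.ext (by simp [hz]) (by simp [ht])
  exact (hI.2 z t (hzt ▸ hI.1.zero_mem)).resolve_right htI

theorem setOf_φ_eq_zero_subset_of_subset (hI : IsPrimeMonoidIdeal I)
    (hsub : I ⊆ {z : End1 R | z.φ = 0}) : {z : End1 R | z.φ = 0} ⊆ I := by
  obtain ⟨a, ha⟩ := hI.1.1
  have haug : End1.augmentation ∈ I := by
    rw [End1.eq_mulLeft_mul_augmentation (hsub ha)] at ha
    exact (hI.2 _ _ ha).resolve_left fun h => End1.mulLeft_φ_ne_zero _ (hsub h)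
  intro z (hz : z.φ = 0)
  rw [End1.eq_mulLeft_mul_augmentation hz]
  exact (hI.1.2 _ haug _).1

end IsPrimeMonoidIdeal

/-- The set `T_e` of endomorphisms `ν_{(w,e)}` (trivial group component) is a prime ideal of
`End₁`; every prime ideal different from `T_e` contains `T_e` or contains
`T_0 = {ν_{(0,g)}}` (which is an ideal); moreover `T_e` is a minimal prime ideal. -/
theorem stmt10 :
    IsPrimeMonoidIdeal {z : End1 R | z.φ = 0} ∧
    IsMonoidIdeal {z : End1 R | z.f = 0} ∧
    (∀ I : Set (End1 R), IsPrimeMonoidIdeal I → I ≠ {z : End1 R | z.φ = 0} →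
      {z : End1 R | z.φ = 0} ⊆ I ∨ {z : End1 R | z.f = 0} ⊆ I) ∧
    (∀ I : Set (End1 R), IsPrimeMonoidIdeal I → I ⊆ {z : End1 R | z.φ = 0} →
      I = {z : End1 R | z.φ = 0}) :=
  ⟨isPrimeMonoidIdeal_setOf_map_eq_zero End1.φHom rfl,
    isMonoidIdeal_setOf_map_eq_zero End1.fHom rfl,
    fun _ hI _ => hI.setOf_φ_eq_zero_subset_or_setOf_f_eq_zero_subset,
    fun _ hI hsub => hsub.antisymm (hI.setOf_φ_eq_zero_subset_of_subset hsub)⟩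
end

section
/- Let C be a category of universal algebras containing a free monogenic algebra A₀ on generator x₀, and let Φ be an automorphism of C with Φ(A₀) = A₀. Define for each object A the map s_A : A → A by s_A(a) = Φ(α_a)(x₀), where α_a : A₀ → A is the unique homomorphism with α_a(x₀) = a. Then each s_A is a bijection, and for every homomorphism ν : A → B one has Φ(ν) = s_B ∘ ν ∘ s_A⁻¹. Moreover, if Φ is the identity then every s_A is the identity, and s for a composite Φ = Γ ∘ Ψ satisfies s_A^Φ = s_A^Γ ∘ s_A^Ψ. -/
open CategoryTheory

universe v u w

variable {C : Type u} [Category.{v} C]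

/-- Given a forgetful functor `U`, a free monogenic object `A₀` with generator `x₀` (so that
homomorphisms `A₀ ⟶ A` correspond bijectively to elements of `A` via `α_a(x₀) = a`), and a
functor `Φ` fixing `A₀`, the map `s_A : A → Φ(A)` is defined by `s_A(a) = Φ(α_a)(x₀)`. -/
noncomputable def sMap (U : C ⥤ Type w) (A₀ : C) (x₀ : U.obj A₀)
    (free : ∀ (A : C) (a : U.obj A), ∃! h : A₀ ⟶ A, U.map h x₀ = a)
    (Φ : C ⥤ C) (hΦ : Φ.obj A₀ = A₀) (A : C) (a : U.obj A) : U.obj (Φ.obj A) :=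
  U.map (eqToHom hΦ.symm ≫ Φ.map (free A a).choose) x₀

/-- Let `C` be a category of universal algebras (forgetful functor `U`) containing a free
monogenic algebra `A₀` on `x₀`, and `Φ` an automorphism of `C` with `Φ(A₀) = A₀`.  Then each
`s_A` (with `s_A(a) = Φ(α_a)(x₀)`) is a bijection, and `Φ(ν) = s_B ∘ ν ∘ s_A⁻¹` for every
homomorphism `ν : A ⟶ B`.  Moreover for the identity automorphism every `s_A` is the identity,
and for a composite `Φ = Γ ∘ Ψ` one has `s_A^Φ = s_A^Γ ∘ s_A^Ψ`. -/
theorem stmt19 (U : C ⥤ Type w) (A₀ : C) (x₀ : U.obj A₀)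
    (free : ∀ (A : C) (a : U.obj A), ∃! h : A₀ ⟶ A, U.map h x₀ = a)
    (Φ Φinv : C ⥤ C) (h1 : Φ ⋙ Φinv = 𝟭 C) (h2 : Φinv ⋙ Φ = 𝟭 C)
    (hΦ : Φ.obj A₀ = A₀) :
    (∀ A : C, Function.Bijective (sMap U A₀ x₀ free Φ hΦ A)) ∧
    (∀ {A B : C} (ν : A ⟶ B) (a : U.obj A),
      U.map (Φ.map ν) (sMap U A₀ x₀ free Φ hΦ A a) =
        sMap U A₀ x₀ free Φ hΦ B (U.map ν a)) ∧
    (∀ (A : C) (a : U.obj A), sMap U A₀ x₀ free (𝟭 C) rfl A a = a) ∧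
    (∀ (Ψ Γ : C ⥤ C) (hΨ : Ψ.obj A₀ = A₀) (hΓ : Γ.obj A₀ = A₀)
        (hΨΓ : (Ψ ⋙ Γ).obj A₀ = A₀) (A : C) (a : U.obj A),
      sMap U A₀ x₀ free (Ψ ⋙ Γ) hΨΓ A a =
        sMap U A₀ x₀ free Γ hΓ (Ψ.obj A) (sMap U A₀ x₀ free Ψ hΨ A a)) := by
  have hspec : ∀ (A : C) (a : U.obj A), U.map (free A a).choose x₀ = a :=
    fun A a => (free A a).choose_spec.1
  have hchoose : ∀ (A : C) (a : U.obj A) (h : A₀ ⟶ A), U.map h x₀ = a →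
      (free A a).choose = h :=
    fun A a h hh => ((free A a).choose_spec.2 h hh).symm
  have key : ∀ {X Y : C} (f g : X ⟶ Y), Φ.map f = Φ.map g → f = g := by
    intro X Y f g hfg
    have hf := Functor.congr_hom h1 f
    have hg := Functor.congr_hom h1 g
    simp only [Functor.comp_map, Functor.id_map] at hf hg
    have : Φinv.map (Φ.map f) = Φinv.map (Φ.map g) := by rw [hfg]
    rw [hf, hg] at this
    have hfix : f = eqToHom (Functor.congr_obj h1 X).symm ≫
        (eqToHom (Functor.congr_obj h1 X) ≫ f ≫ eqToHom (Functor.congr_obj h1 Y).symm) ≫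
        eqToHom (Functor.congr_obj h1 Y) := by simp
    rw [hfix, this]
    simp
  refine ⟨?_, ?_, ?_, ?_⟩
  · intro A
    constructor
    · intro a a' h
      have e1 : eqToHom hΦ.symm ≫ Φ.map (free A a).choose
          = eqToHom hΦ.symm ≫ Φ.map (free A a').choose :=
        (hchoose (Φ.obj A) (sMap U A₀ x₀ free Φ hΦ A a) _ rfl).symm.trans
          (hchoose (Φ.obj A) (sMap U A₀ x₀ free Φ hΦ A a) _ h.symm)
      have e2 : Φ.map (free A a).choose = Φ.map (free A a').choose := by
        have := congrArg (fun f => eqToHom hΦ ≫ f) e1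
        simpa using this
      have e3 := key _ _ e2
      rw [← hspec A a, ← hspec A a', e3]
    · intro b
      have hinv : Φinv.obj A₀ = A₀ := by
        have := Functor.congr_obj h1 A₀
        rwa [Functor.comp_obj, Functor.id_obj, hΦ] at this
      have hAeq : Φinv.obj (Φ.obj A) = A := Functor.congr_obj h1 A
      refine ⟨U.map (eqToHom hinv.symm ≫ Φinv.map (free (Φ.obj A) b).choose
        ≫ eqToHom hAeq) x₀, ?_⟩
      have hc := hchoose A _ (eqToHom hinv.symm ≫ Φinv.map (free (Φ.obj A) b).choose
        ≫ eqToHom hAeq) rfl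
      show U.map (eqToHom hΦ.symm ≫ Φ.map _) x₀ = b
      rw [hc]
      have hβ2 := Functor.congr_hom h2 (free (Φ.obj A) b).choose
      simp only [Functor.comp_map, Functor.id_map] at hβ2
      have heq : eqToHom hΦ.symm ≫ Φ.map (eqToHom hinv.symm ≫
          Φinv.map (free (Φ.obj A) b).choose ≫ eqToHom hAeq) = (free (Φ.obj A) b).choose := by
        simp only [Functor.map_comp, eqToHom_map, hβ2]
        simp only [← Category.assoc, eqToHom_trans, eqToHom_refl, Category.id_comp]
        simp [eqToHom_trans]
      rw [heq]
      exact hspec _ _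
  · intro A B ν a
    have h3 : (free B (U.map ν a)).choose = (free A a).choose ≫ ν :=
      hchoose _ _ _ (by rw [FunctorToTypes.map_comp_apply, hspec])
    show _ = U.map (eqToHom hΦ.symm ≫ Φ.map (free B (U.map ν a)).choose) x₀
    rw [h3, Functor.map_comp]
    simp [sMap, FunctorToTypes.map_comp_apply]
  · intro A a
    simp [sMap, hspec]
  · intro Ψ Γ hΨ hΓ hΨΓ A a
    have hβ : (free (Ψ.obj A) (sMap U A₀ x₀ free Ψ hΨ A a)).choose
        = eqToHom hΨ.symm ≫ Ψ.map (free A a).choose := hchoose _ _ _ rfl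
    show U.map (eqToHom hΨΓ.symm ≫ Γ.map (Ψ.map (free A a).choose)) x₀
        = U.map (eqToHom hΓ.symm ≫ Γ.map _) x₀
    rw [hβ]
    simp only [Functor.map_comp, eqToHom_map, ← Category.assoc, eqToHom_trans]
end
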